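/- Let (A, 𝒜, μ) be a measure space, B a set, and fix b ∈ B. Let Θ be a set and for each θ ∈ Θ let f_θ : B × A → ℝ≥0 be such that a ↦ f_θ(b, a) is integrable with respect to μ. Let g : B × A → ℝ satisfy g(b, a) = c for all a ∈ A, where c > 0 (the missingness mechanism is MAR with respect to the realised data and assigns positive density to the realised pattern). Define L_t(θ) = ∫_A f_θ(b, a)·g(b, a) dμ(a) and L_s(θ) = ∫_A f_θ(b, a) dμ(a). Then for every θ₀ ∈ Θ, θ₀ maximises L_t over Θ if and only if θ₀ maximises L_s over Θ. Hence ignorable likelihood estimation based on L_s yields exactly the maximisers of the true observed-data likelihood L_t, without any model for the missingness process. -/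
import Mathlib

open MeasureTheory

/-- **Missingness-model-free ignorability: maximisers coincide.**
With `(A, 𝒜, μ)` the space of missing components, `B` the space of observed components,
`b` the realised observed value, a data model `{f_θ : θ ∈ Θ}` with each `a ↦ f_θ (b, a)`
integrable, and the true missingness mechanism `g` MAR with respect to the realised data
with constant value `c > 0`, define the true observed-data likelihood
`L_t θ = ∫ f_θ (b, a) * g (b, a) dμ` and the ignorable likelihood
`L_s θ = ∫ f_θ (b, a) dμ`. Then `θ₀` maximises `L_t` over `Θ` iff it maximises `L_s`. -/
theorem ignorable_likelihood_maximisers {A : Type*} [MeasurableSpace A] (μ : Measure A)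
    {B : Type*} (b : B) {Θ : Type*}
    (f : Θ → B × A → NNReal) (hf : ∀ θ : Θ, Integrable (fun a => (f θ (b, a) : ℝ)) μ)
    (g : B × A → ℝ) (c : ℝ) (hc : 0 < c) (hg : ∀ a : A, g (b, a) = c) :
    ∀ θ₀ : Θ,
      ((∀ θ : Θ, ∫ a, (f θ (b, a) : ℝ) * g (b, a) ∂μ ≤ ∫ a, (f θ₀ (b, a) : ℝ) * g (b, a) ∂μ) ↔
       (∀ θ : Θ, ∫ a, (f θ (b, a) : ℝ) ∂μ ≤ ∫ a, (f θ₀ (b, a) : ℝ) ∂μ)) := by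
  have key : ∀ θ : Θ, ∫ a, (f θ (b, a) : ℝ) * g (b, a) ∂μ = (∫ a, (f θ (b, a) : ℝ) ∂μ) * c := by
    intro θ
    simp_rw [hg]
    exact integral_mul_const c _
  intro θ₀
  constructor
  · intro h θ
    have := h θ
    rw [key, key] at this
    exact le_of_mul_le_mul_right this hc
  · intro h θ
    rw [key, key]
    exact mul_le_mul_of_nonneg_right (h θ) hc.le
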